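/- (Main contraction theorem.) Let n ≥ 1, let G be a real n×n matrix, F ∈ ℝⁿ, v > 0, W a symmetric positive definite n×n real matrix, and let R be a symmetric positive semidefinite n×n matrix satisfying the Riccati fixed-point equation R = G(R − (R F)(R F)ᵀ/(⟨F, R F⟩ + v))Gᵀ + W. Set A := R F/(⟨F, R F⟩ + v). Then there exists γ with 0 ≤ γ < 1 such that for every x ∈ ℝⁿ, writing z := Gᵀx − ⟨A, Gᵀx⟩·F (that is, z = (I − A⊗F)Gᵀ x, where A⊗F is the linear map u ↦ ⟨u, A⟩F), one has ⟨R z, z⟩ ≤ γ·⟨R x, x⟩. -/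

import Mathlib

/-!
Put `y = Gᵀx` and `c = ⟨F, RF⟩ + v`. Taking the quadratic form of the fixed-point equation at `x`
gives `⟨Rx, x⟩ = ⟨Ry, y⟩ - ⟨RF, y⟩² / c + ⟨Wx, x⟩`, while expanding `z = y - (⟨RF, y⟩ / c) F`
gives `⟨Rz, z⟩ = ⟨Ry, y⟩ - ⟨RF, y⟩² / c - v ⟨RF, y⟩² / c²`. Hence `⟨Rz, z⟩ ≤ ⟨Rx, x⟩ - ⟨Wx, x⟩`.
Since `W` is positive definite, `εR ≤ W` in the Loewner order for some `ε > 0` (compare the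
extreme points of the spectra), and `γ = max (1 - ε) 0` works.
-/

open Matrix
open scoped MatrixOrder ComplexOrder

namespace Matrix

variable {n : Type*} [Fintype n]

theorem PosDef.exists_pos_smul_le {𝕜 : Type*} [RCLike 𝕜] [DecidableEq n] {A B : Matrix n n 𝕜}
    (hA : A.PosDef) (hB : B.IsHermitian) : ∃ ε : ℝ, 0 < ε ∧ ε • B ≤ A := by
  -- the spectral lower bound for `A` needs `Matrix n n 𝕜` to be nontrivial
  cases isEmpty_or_nonempty n
  · exact ⟨1, one_pos, (Subsingleton.elim _ _).le⟩
  obtain ⟨r, hr, hrA⟩ : ∃ r > 0, algebraMap ℝ (Matrix n n 𝕜) r ≤ A :=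
    (CFC.exists_pos_algebraMap_le_iff hA.isHermitian.isSelfAdjoint).mpr
      fun _ hx => hA.isStrictlyPositive.spectrum_pos hx
  obtain ⟨b, hb⟩ := (isCompact_iff_compactSpace.mpr
    (ContinuousFunctionalCalculus.compactSpace_spectrum (R := ℝ) B)).bddAbove
  have hb₀ : 0 < max b 1 := lt_max_of_lt_right one_pos
  have hBb : B ≤ algebraMap ℝ _ (max b 1) :=
    le_algebraMap_of_spectrum_le (fun _ hx => (hb hx).trans (le_max_left b 1)) hB.isSelfAdjoint
  refine ⟨r / max b 1, div_pos hr hb₀, ?_⟩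
  calc (r / max b 1) • B ≤ (r / max b 1) • algebraMap ℝ _ (max b 1) :=
        smul_le_smul_of_nonneg_left hBb (div_pos hr hb₀).le
    _ = algebraMap ℝ _ r := by
        rw [Algebra.algebraMap_eq_smul_one, Algebra.algebraMap_eq_smul_one, smul_smul,
          div_mul_cancel₀ _ hb₀.ne']
    _ ≤ A := hrA

theorem mulVec_dotProduct_le_of_le {A B : Matrix n n ℝ} (h : A ≤ B) (x : n → ℝ) :
    (A *ᵥ x) ⬝ᵥ x ≤ (B *ᵥ x) ⬝ᵥ x := by
  have := (le_iff.mp h).dotProduct_mulVec_nonneg x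
  rw [star_trivial, sub_mulVec, dotProduct_sub, dotProduct_comm, dotProduct_comm x] at this
  linarith

variable {m α : Type*} [Fintype m] [CommRing α]

theorem mul_mul_transpose_mulVec_dotProduct (G : Matrix m n α) (M : Matrix n n α) (x : m → α) :
    ((G * M * Gᵀ) *ᵥ x) ⬝ᵥ x = (M *ᵥ (Gᵀ *ᵥ x)) ⬝ᵥ (Gᵀ *ᵥ x) := by
  rw [← mulVec_mulVec, ← mulVec_mulVec, dotProduct_comm, dotProduct_mulVec, ← mulVec_transpose,
    dotProduct_comm]

theorem vecMulVec_self_mulVec_dotProduct (u y : n → α) :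
    (vecMulVec u u *ᵥ y) ⬝ᵥ y = (u ⬝ᵥ y) ^ 2 := by
  rw [vecMulVec_mulVec, op_smul_eq_smul, smul_dotProduct, smul_eq_mul, sq]

theorem riccati_mulVec_dotProduct (G : Matrix m n α) (R : Matrix n n α) (W : Matrix m m α)
    (u : n → α) (k : α) (x : m → α) :
    ((G * (R - k • vecMulVec u u) * Gᵀ + W) *ᵥ x) ⬝ᵥ x =
      (R *ᵥ (Gᵀ *ᵥ x)) ⬝ᵥ (Gᵀ *ᵥ x) - k * (u ⬝ᵥ (Gᵀ *ᵥ x)) ^ 2 + (W *ᵥ x) ⬝ᵥ x := by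
  rw [add_mulVec, add_dotProduct, mul_mul_transpose_mulVec_dotProduct, sub_mulVec, sub_dotProduct,
    smul_mulVec, smul_dotProduct, vecMulVec_self_mulVec_dotProduct, smul_eq_mul]

theorem IsSymm.mulVec_sub_gain_dotProduct_le {R : Matrix n n ℝ} (hR : R.IsSymm) {v : ℝ}
    (hv : 0 ≤ v) (F y : n → ℝ) :
    (R *ᵥ (y - (((F ⬝ᵥ (R *ᵥ F) + v)⁻¹ • (R *ᵥ F)) ⬝ᵥ y) • F)) ⬝ᵥ
        (y - (((F ⬝ᵥ (R *ᵥ F) + v)⁻¹ • (R *ᵥ F)) ⬝ᵥ y) • F) ≤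
      (R *ᵥ y) ⬝ᵥ y - (F ⬝ᵥ (R *ᵥ F) + v)⁻¹ * ((R *ᵥ F) ⬝ᵥ y) ^ 2 := by
  set c := F ⬝ᵥ (R *ᵥ F) + v
  set s := (R *ᵥ F) ⬝ᵥ y
  have hRyF : (R *ᵥ y) ⬝ᵥ F = s := by
    rw [dotProduct_comm, dotProduct_mulVec, ← mulVec_transpose, hR.eq]
  have hRFF : (R *ᵥ F) ⬝ᵥ F = c - v := by
    rw [dotProduct_comm]; ring
  have hc : c⁻¹ * c * c⁻¹ = c⁻¹ := by simpa only [inv_inv] using mul_inv_mul_cancel c⁻¹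
  simp only [smul_dotProduct, smul_eq_mul, mulVec_sub, mulVec_smul, sub_dotProduct, dotProduct_sub,
    dotProduct_smul, hRyF, hRFF]
  nlinarith [mul_nonneg hv (sq_nonneg (c⁻¹ * s))]

end Matrix

theorem stmt_5_general {n : ℕ} (R G W : Matrix (Fin n) (Fin n) ℝ)
    (F : Fin n → ℝ) (v : ℝ) (hv : 0 < v) (hR : R.PosSemidef) (hW : W.PosDef)
    (hRic : R = G * (R - (F ⬝ᵥ (R *ᵥ F) + v)⁻¹ • vecMulVec (R *ᵥ F) (R *ᵥ F)) * Gᵀ + W)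
    (A : Fin n → ℝ) (hA : A = (F ⬝ᵥ (R *ᵥ F) + v)⁻¹ • (R *ᵥ F)) :
    ∃ γ : ℝ, 0 ≤ γ ∧ γ < 1 ∧ ∀ x z : Fin n → ℝ,
      z = Gᵀ *ᵥ x - (A ⬝ᵥ (Gᵀ *ᵥ x)) • F →
      (R *ᵥ z) ⬝ᵥ z ≤ γ * ((R *ᵥ x) ⬝ᵥ x) := by
  obtain ⟨ε, hε, hεR⟩ := hW.exists_pos_smul_le hR.isHermitian
  refine ⟨max (1 - ε) 0, le_max_right _ _, max_lt (by linarith) one_pos, ?_⟩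
  rintro x z rfl
  subst hA
  have hgain := (isHermitian_iff_isSymm.mp hR.isHermitian).mulVec_sub_gain_dotProduct_le hv.le F
    (Gᵀ *ᵥ x)
  have hquad := riccati_mulVec_dotProduct G R W (R *ᵥ F) (F ⬝ᵥ (R *ᵥ F) + v)⁻¹ x
  rw [← hRic] at hquad
  have hWx : ε * ((R *ᵥ x) ⬝ᵥ x) ≤ (W *ᵥ x) ⬝ᵥ x := by
    simpa only [smul_mulVec, smul_dotProduct, smul_eq_mul] using mulVec_dotProduct_le_of_le hεR x
  have hRx_nonneg : 0 ≤ (R *ᵥ x) ⬝ᵥ x := by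
    simpa [dotProduct_comm] using hR.dotProduct_mulVec_nonneg x
  calc _ ≤ (1 - ε) * ((R *ᵥ x) ⬝ᵥ x) := by linarith
    _ ≤ max (1 - ε) 0 * ((R *ᵥ x) ⬝ᵥ x) := mul_le_mul_of_nonneg_right (le_max_left _ _) hRx_nonneg

/-- Main contraction theorem: Let `R` be a symmetric positive semidefinite
solution of the Riccati fixed-point equation, with `W` symmetric positive definite and
`v > 0`. Set `A := R F/(⟨F, R F⟩ + v)`. Then there is `γ ∈ [0,1)` such that for every
`x ∈ ℝⁿ`, for `z := Gᵀx − ⟨A, Gᵀx⟩·F = (I − A⊗F)Gᵀ x`, one has `⟨R z, z⟩ ≤ γ·⟨R x, x⟩`. -/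
theorem stmt_5 {n : ℕ} (hn : 1 ≤ n) (R G W : Matrix (Fin n) (Fin n) ℝ)
    (F : Fin n → ℝ) (v : ℝ) (hv : 0 < v) (hR : R.PosSemidef) (hW : W.PosDef)
    (hRic : R = G * (R - (F ⬝ᵥ (R *ᵥ F) + v)⁻¹ • vecMulVec (R *ᵥ F) (R *ᵥ F)) * Gᵀ + W)
    (A : Fin n → ℝ) (hA : A = (F ⬝ᵥ (R *ᵥ F) + v)⁻¹ • (R *ᵥ F)) :
    ∃ γ : ℝ, 0 ≤ γ ∧ γ < 1 ∧ ∀ x z : Fin n → ℝ,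
      z = Gᵀ *ᵥ x - (A ⬝ᵥ (Gᵀ *ᵥ x)) • F →
      (R *ᵥ z) ⬝ᵥ z ≤ γ * ((R *ᵥ x) ⬝ᵥ x) :=
  stmt_5_general R G W F v hv hR hW hRic A hA
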